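/- Let R ∈ R^{k×n} be a count-sketch matrix. For any fixed vectors x, y ∈ R^n, the variance of (Rx)ᵀ(Ry) satisfies Var[(Rx)ᵀ(Ry)] ≤ (1/k)·((xᵀy)² + ‖x‖²₂‖y‖²₂) ≤ (2/k)·‖x‖²₂‖y‖²₂. -/

import Mathlib

open Matrix BigOperators

/-- The count-sketch matrix `R = ΦΔ` determined by a sample point
`ω = (signs, hash)`. -/
noncomputable def csMatrix {n k : ℕ} (ω : (Fin n → Bool) × (Fin n → Fin k)) :
    Matrix (Fin k) (Fin n) ℝ :=
  fun j i => if ω.2 i = j then (if ω.1 i then 1 else -1) else 0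

/-- Expectation over the uniform distribution on all sign/hash configurations. -/
noncomputable def csExpect {n k : ℕ} (f : (Fin n → Bool) × (Fin n → Fin k) → ℝ) : ℝ :=
  (∑ ω : (Fin n → Bool) × (Fin n → Fin k), f ω) /
    (Fintype.card ((Fin n → Bool) × (Fin n → Fin k)))

/-- Variance with respect to the uniform count-sketch distribution. -/
noncomputable def csVar {n k : ℕ} (f : (Fin n → Bool) × (Fin n → Fin k) → ℝ) : ℝ :=
  csExpect (fun ω => (f ω - csExpect f) ^ 2)

open Finset

noncomputable def rr (b : Bool) : ℝ := if b then 1 else -1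
lemma rr_sq (b : Bool) : rr b * rr b = 1 := by cases b <;> simp [rr]
lemma rr_not (b : Bool) : rr (!b) = - rr b := by cases b <;> simp [rr]

lemma flip_zero {n : ℕ} (i : Fin n) (F : (Fin n → Bool) → ℝ)
    (h : ∀ s, F (Function.update s i (!(s i))) = -F s) :
    ∑ s : Fin n → Bool, F s = 0 := by
  have hinv : Function.Involutive (fun s : Fin n → Bool => Function.update s i (!(s i))) := by
    intro s; simp [Function.update_idem]
  have key := Fintype.sum_bijective _ hinv.bijective F (fun s => - F s) (by
    intro s; rw [h s]; ring)
  have : ∑ s : Fin n → Bool, F s = - ∑ s : Fin n → Bool, F s := by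
    simpa [Finset.sum_neg_distrib] using key
  linarith

lemma sum_two {n : ℕ} {a b : Fin n} (hab : a ≠ b) :
    ∑ s : Fin n → Bool, rr (s a) * rr (s b) = 0 := by
  apply flip_zero a
  intro s
  rw [Function.update_self, Function.update_of_ne (Ne.symm hab), rr_not]
  ring

lemma sum_one_bool {n : ℕ} : ∑ _s : Fin n → Bool, (1:ℝ) = 2 ^ n := by
  simp [Finset.card_univ]

lemma sum_four {n : ℕ} (a b c d : Fin n) :
    ∑ s : Fin n → Bool, rr (s a) * rr (s b) * (rr (s c) * rr (s d)) =
      if (a = b ∧ c = d) ∨ (a = c ∧ b = d) ∨ (a = d ∧ b = c) then (2:ℝ) ^ n else 0 := by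
  by_cases h1 : a = b
  · subst h1
    by_cases h2 : c = d
    · subst h2
      simp only [rr_sq, one_mul]
      simp [sum_one_bool]
    · have e : ∀ s : Fin n → Bool, rr (s a) * rr (s a) * (rr (s c) * rr (s d))
          = rr (s c) * rr (s d) := by intro s; rw [rr_sq]; ring
      rw [Finset.sum_congr rfl (fun s _ => e s), sum_two h2]
      have : ¬((a = a ∧ c = d) ∨ (a = c ∧ a = d) ∨ (a = d ∧ a = c)) := by
        rintro (⟨-, h⟩ | ⟨hc, hd⟩ | ⟨hd, hc⟩) <;> exact h2 (by grind)
      rw [if_neg this]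
  · by_cases h2 : c = d
    · subst h2
      have e : ∀ s : Fin n → Bool, rr (s a) * rr (s b) * (rr (s c) * rr (s c))
          = rr (s a) * rr (s b) := by intro s; rw [rr_sq]; ring
      rw [Finset.sum_congr rfl (fun s _ => e s), sum_two h1]
      have : ¬((a = b ∧ c = c) ∨ (a = c ∧ b = c) ∨ (a = c ∧ b = c)) := by
        rintro (⟨h, -⟩ | ⟨hc, hd⟩ | ⟨hd, hc⟩) <;> exact h1 (by grind)
      rw [if_neg this]
    · by_cases h3 : a = c
      · subst h3
        by_cases h4 : b = d
        · subst h4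
          have e : ∀ s : Fin n → Bool, rr (s a) * rr (s b) * (rr (s a) * rr (s b))
              = 1 := by
            intro s
            rw [show rr (s a) * rr (s b) * (rr (s a) * rr (s b))
                = rr (s a) * rr (s a) * (rr (s b) * rr (s b)) by ring, rr_sq, rr_sq]; ring
          rw [Finset.sum_congr rfl (fun s _ => e s), sum_one_bool,
            if_pos (Or.inr (Or.inl ⟨rfl, rfl⟩))]
        · have e : ∀ s : Fin n → Bool, rr (s a) * rr (s b) * (rr (s a) * rr (s d))
              = rr (s b) * rr (s d) := by
            intro s
            rw [show rr (s a) * rr (s b) * (rr (s a) * rr (s d))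
                = rr (s a) * rr (s a) * (rr (s b) * rr (s d)) by ring, rr_sq]; ring
          rw [Finset.sum_congr rfl (fun s _ => e s), sum_two h4]
          have : ¬((a = b ∧ a = d) ∨ (a = a ∧ b = d) ∨ (a = d ∧ b = a)) := by
            rintro (⟨h, -⟩ | ⟨-, h⟩ | ⟨hd, hb⟩)
            · exact h1 h
            · exact h4 h
            · exact h4 (by grind)
          rw [if_neg this]
      · by_cases h4 : a = d
        · subst h4
          by_cases h5 : b = c
          · subst h5
            have e : ∀ s : Fin n → Bool, rr (s a) * rr (s b) * (rr (s b) * rr (s a))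
                = 1 := by
              intro s
              rw [show rr (s a) * rr (s b) * (rr (s b) * rr (s a))
                  = rr (s a) * rr (s a) * (rr (s b) * rr (s b)) by ring, rr_sq, rr_sq]; ring
            rw [Finset.sum_congr rfl (fun s _ => e s), sum_one_bool,
              if_pos (Or.inr (Or.inr ⟨rfl, rfl⟩))]
          · have e : ∀ s : Fin n → Bool, rr (s a) * rr (s b) * (rr (s c) * rr (s a))
                = rr (s b) * rr (s c) := by
              intro s
              rw [show rr (s a) * rr (s b) * (rr (s c) * rr (s a))
                  = rr (s a) * rr (s a) * (rr (s b) * rr (s c)) by ring, rr_sq]; ring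
            rw [Finset.sum_congr rfl (fun s _ => e s), sum_two h5]
            have : ¬((a = b ∧ c = a) ∨ (a = c ∧ b = a) ∨ (a = a ∧ b = c)) := by
              rintro (⟨h, -⟩ | ⟨hc, hb⟩ | ⟨-, h⟩)
              · exact h1 h
              · exact h3 hc
              · exact h5 h
            rw [if_neg this]
        · -- a ∉ {b, c, d} : flip at a
          have : ∑ s : Fin n → Bool, rr (s a) * rr (s b) * (rr (s c) * rr (s d)) = 0 := by
            apply flip_zero a
            intro s
            rw [Function.update_self, Function.update_of_ne (Ne.symm h1),
              Function.update_of_ne (Ne.symm h3), Function.update_of_ne (Ne.symm h4), rr_not]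
            ring
          rw [this]
          have : ¬((a = b ∧ c = d) ∨ (a = c ∧ b = d) ∨ (a = d ∧ b = c)) := by
            rintro (⟨h, -⟩ | ⟨h, -⟩ | ⟨h, -⟩)
            · exact h1 h
            · exact h3 h
            · exact h4 h
          rw [if_neg this]

lemma sum_one_hash {n k : ℕ} : ∑ _h : Fin n → Fin k, (1:ℝ) = (k:ℝ) ^ n := by
  simp [Finset.card_univ]

lemma sum_hash_pair {n k : ℕ} (hk : 0 < k) {a b : Fin n} (hab : a ≠ b) :
    (k:ℝ) * ∑ h : Fin n → Fin k, (if h a = h b then (1:ℝ) else 0) = (k:ℝ) ^ n := by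
  obtain ⟨m, rfl⟩ : ∃ m, k = m + 1 := ⟨k - 1, (Nat.succ_pred_eq_of_pos hk).symm⟩
  have key : ∀ c : Fin (m+1),
      (∑ h : Fin n → Fin (m+1), (if h a = h b then (1:ℝ) else 0))
        = ∑ h : Fin n → Fin (m+1), (if h a = h b + c then (1:ℝ) else 0) := by
    intro c
    have hbij : Function.Bijective
        (fun h : Fin n → Fin (m+1) => Function.update h b (h b + c)) := by
      rw [Function.bijective_iff_has_inverse]
      refine ⟨fun h => Function.update h b (h b - c), fun h => ?_, fun h => ?_⟩
      · simp only [Function.update_idem, Function.update_self]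
        rw [add_sub_cancel_right]
        exact Function.update_eq_self b h
      · simp only [Function.update_idem, Function.update_self]
        rw [sub_add_cancel]
        exact Function.update_eq_self b h
    refine (Fintype.sum_bijective _ hbij
      (fun h => if h a = h b + c then (1:ℝ) else 0)
      (fun h => if h a = h b then (1:ℝ) else 0) ?_).symm
    intro h
    simp only [Function.update_of_ne hab, Function.update_self]
  have sum_c : ∑ c : Fin (m+1), (∑ h : Fin n → Fin (m+1), (if h a = h b + c then (1:ℝ) else 0))
      = ((m:ℝ)+1) ^ n := by
    rw [Finset.sum_comm]
    have e1 : ∀ h : Fin n → Fin (m+1),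
        (∑ c : Fin (m+1), (if h a = h b + c then (1:ℝ) else 0)) = 1 := by
      intro h
      have e2 : ∀ c : Fin (m+1), (h a = h b + c) ↔ (c = h a - h b) := by
        intro c; constructor
        · intro hc; rw [hc]; exact (add_sub_cancel_left _ _).symm
        · intro hc; rw [hc]; exact (add_sub_cancel _ _).symm
      simp only [e2]
      simp
    simp only [e1]
    simp [Finset.card_univ]
  calc ((m+1:ℕ):ℝ) * ∑ h : Fin n → Fin (m+1), (if h a = h b then (1:ℝ) else 0)
      = ∑ _c : Fin (m+1), (∑ h : Fin n → Fin (m+1), (if h a = h b then (1:ℝ) else 0)) := by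
        rw [Finset.sum_const, Finset.card_univ, Fintype.card_fin]; push_cast; ring
    _ = ∑ c : Fin (m+1), (∑ h : Fin n → Fin (m+1), (if h a = h b + c then (1:ℝ) else 0)) :=
        Finset.sum_congr rfl (fun c _ => key c)
    _ = ((m:ℝ)+1) ^ n := sum_c
    _ = ((m+1:ℕ):ℝ) ^ n := by push_cast; ring

lemma sum_split {n k : ℕ} (F : (Fin n → Bool) → ℝ) (G : (Fin n → Fin k) → ℝ) :
    ∑ ω : (Fin n → Bool) × (Fin n → Fin k), F ω.1 * G ω.2
      = (∑ s, F s) * (∑ h, G h) := by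
  rw [Finset.sum_mul_sum]
  rw [Fintype.sum_prod_type]

lemma csMatrix_apply {n k : ℕ} (ω : (Fin n → Bool) × (Fin n → Fin k)) (j i) :
    csMatrix ω j i = if ω.2 i = j then rr (ω.1 i) else 0 := rfl

lemma inner_j {k : ℕ} (ha hb : Fin k) (A B xa yb : ℝ) :
    ∑ j : Fin k, (if ha = j then A else 0) * xa * ((if hb = j then B else 0) * yb)
      = A * B * ((if ha = hb then (1:ℝ) else 0) * (xa * yb)) := by
  have e : ∀ j, (if ha = j then A else 0) * xa * ((if hb = j then B else 0) * yb)
      = if ha = j then (if hb = j then A * xa * (B * yb) else 0) else 0 := by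
    intro j; split_ifs <;> ring
  rw [Finset.sum_congr rfl (fun j _ => e j), Finset.sum_ite_eq]
  simp only [Finset.mem_univ, if_true]
  by_cases hab : ha = hb
  · subst hab; simp; ring
  · rw [if_neg (fun h => hab h.symm), if_neg hab]; ring

lemma expand {n k : ℕ} (x y : Fin n → ℝ) (ω : (Fin n → Bool) × (Fin n → Fin k)) :
    (csMatrix ω *ᵥ x) ⬝ᵥ (csMatrix ω *ᵥ y)
      = ∑ p : Fin n × Fin n,
          (rr (ω.1 p.1) * rr (ω.1 p.2))
            * ((if ω.2 p.1 = ω.2 p.2 then (1:ℝ) else 0) * (x p.1 * y p.2)) := by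
  simp only [dotProduct, mulVec, csMatrix_apply, Fintype.sum_prod_type]
  simp only [Finset.sum_mul_sum]
  rw [Finset.sum_comm]
  refine Finset.sum_congr rfl (fun a _ => ?_)
  rw [Finset.sum_comm]
  refine Finset.sum_congr rfl (fun b _ => ?_)
  exact inner_j _ _ _ _ _ _

lemma sum_hash_pair' {n k : ℕ} (hk : 0 < k) {a b : Fin n} (hab : a ≠ b) :
    ∑ h : Fin n → Fin k, (if h a = h b then (1:ℝ) else 0) = (k:ℝ) ^ n / k := by
  have hk' : (k:ℝ) ≠ 0 := Nat.cast_ne_zero.mpr hk.ne'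
  rw [eq_div_iff hk', mul_comm]
  exact sum_hash_pair hk hab

lemma sumF {n k : ℕ} (x y : Fin n → ℝ) :
    ∑ ω : (Fin n → Bool) × (Fin n → Fin k),
        (csMatrix ω *ᵥ x) ⬝ᵥ (csMatrix ω *ᵥ y)
      = (2:ℝ) ^ n * (k:ℝ) ^ n * (∑ i, x i * y i) := by
  simp only [expand]
  rw [Finset.sum_comm]
  have e : ∀ p : Fin n × Fin n,
      (∑ ω : (Fin n → Bool) × (Fin n → Fin k),
          (rr (ω.1 p.1) * rr (ω.1 p.2))
            * ((if ω.2 p.1 = ω.2 p.2 then (1:ℝ) else 0) * (x p.1 * y p.2)))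
        = if p.1 = p.2 then (2:ℝ)^n * ((k:ℝ)^n * (x p.1 * y p.2)) else 0 := by
    intro p
    rw [sum_split (fun s => rr (s p.1) * rr (s p.2))
      (fun h => (if h p.1 = h p.2 then (1:ℝ) else 0) * (x p.1 * y p.2))]
    by_cases hp : p.1 = p.2
    · rw [if_pos hp]
      have e1 : ∀ s : Fin n → Bool, rr (s p.1) * rr (s p.2) = 1 := by
        intro s; rw [hp, rr_sq]
      have e2 : ∀ h : Fin n → Fin k,
          (if h p.1 = h p.2 then (1:ℝ) else 0) * (x p.1 * y p.2) = x p.1 * y p.2 := by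
        intro h; rw [hp, if_pos rfl, one_mul]
      rw [Finset.sum_congr rfl (fun s _ => e1 s), Finset.sum_congr rfl (fun h _ => e2 h),
        sum_one_bool, Finset.sum_const, Finset.card_univ]
      simp [mul_assoc]
    · rw [if_neg hp, sum_two hp, zero_mul]
  rw [Finset.sum_congr rfl (fun p _ => e p), Fintype.sum_prod_type]
  have e3 : ∀ a : Fin n,
      (∑ b : Fin n, if a = b then (2:ℝ)^n * ((k:ℝ)^n * (x a * y b)) else 0)
        = (2:ℝ)^n * ((k:ℝ)^n * (x a * y a)) := by
    intro a; rw [Finset.sum_ite_eq]; simp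
  rw [Finset.sum_congr rfl (fun a _ => e3 a), ← Finset.mul_sum, ← Finset.mul_sum]
  ring

lemma ite_one_mul_ite_one {P Q : Prop} [Decidable P] [Decidable Q] (h : P ↔ Q) :
    (if P then (1:ℝ) else 0) * (if Q then (1:ℝ) else 0) = (if P then (1:ℝ) else 0) := by
  split_ifs with h1 h2 h3 <;> simp_all

lemma sum_ite_pair {n : ℕ} (a b : Fin n) (V : ℝ) :
    (∑ c : Fin n, ∑ d : Fin n, if c = a ∧ d = b then V else 0) = V := by
  have e : ∀ c : Fin n, (∑ d : Fin n, if c = a ∧ d = b then V else 0)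
      = if c = a then V else 0 := by
    intro c
    by_cases hc : c = a
    · subst hc; simp
    · simp [hc]
  rw [Finset.sum_congr rfl (fun c _ => e c)]
  simp

lemma sumF2 {n k : ℕ} (hk : 0 < k) (x y : Fin n → ℝ) :
    ∑ ω : (Fin n → Bool) × (Fin n → Fin k),
        ((csMatrix ω *ᵥ x) ⬝ᵥ (csMatrix ω *ᵥ y)) ^ 2
      = (2:ℝ) ^ n * (k:ℝ) ^ n * ((∑ i, x i * y i) ^ 2
          + (∑ a, ∑ b, if a = b then 0
              else (x a * y b * (x a * y b) + x a * y b * (x b * y a))) / k) := by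
  have hk' : (k:ℝ) ≠ 0 := Nat.cast_ne_zero.mpr hk.ne'
  simp only [expand, sq, Finset.sum_mul_sum]
  rw [Finset.sum_comm]
  -- now : ∑ p ∑ ω ∑ q
  have swap2 : ∀ p : Fin n × Fin n,
      (∑ ω : (Fin n → Bool) × (Fin n → Fin k), ∑ q : Fin n × Fin n,
        ((rr (ω.1 p.1) * rr (ω.1 p.2)) * ((if ω.2 p.1 = ω.2 p.2 then (1:ℝ) else 0) * (x p.1 * y p.2)))
        * ((rr (ω.1 q.1) * rr (ω.1 q.2)) * ((if ω.2 q.1 = ω.2 q.2 then (1:ℝ) else 0) * (x q.1 * y q.2))))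
      = ∑ q : Fin n × Fin n, ∑ ω : (Fin n → Bool) × (Fin n → Fin k),
        ((rr (ω.1 p.1) * rr (ω.1 p.2)) * ((if ω.2 p.1 = ω.2 p.2 then (1:ℝ) else 0) * (x p.1 * y p.2)))
        * ((rr (ω.1 q.1) * rr (ω.1 q.2)) * ((if ω.2 q.1 = ω.2 q.2 then (1:ℝ) else 0) * (x q.1 * y q.2))) :=
    fun p => Finset.sum_comm
  rw [Finset.sum_congr rfl (fun p _ => swap2 p)]
  -- per (p,q) compute the ω-sum
  have W : ∀ p q : Fin n × Fin n,
      (∑ ω : (Fin n → Bool) × (Fin n → Fin k),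
        ((rr (ω.1 p.1) * rr (ω.1 p.2)) * ((if ω.2 p.1 = ω.2 p.2 then (1:ℝ) else 0) * (x p.1 * y p.2)))
        * ((rr (ω.1 q.1) * rr (ω.1 q.2)) * ((if ω.2 q.1 = ω.2 q.2 then (1:ℝ) else 0) * (x q.1 * y q.2))))
      = (if (p.1 = p.2 ∧ q.1 = q.2) ∨ (p.1 = q.1 ∧ p.2 = q.2) ∨ (p.1 = q.2 ∧ p.2 = q.1)
          then (2:ℝ)^n else 0)
        * ((∑ h : Fin n → Fin k,
            (if h p.1 = h p.2 then (1:ℝ) else 0) * (if h q.1 = h q.2 then (1:ℝ) else 0))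
          * (x p.1 * y p.2 * (x q.1 * y q.2))) := by
    intro p q
    have e : ∀ ω : (Fin n → Bool) × (Fin n → Fin k),
        ((rr (ω.1 p.1) * rr (ω.1 p.2)) * ((if ω.2 p.1 = ω.2 p.2 then (1:ℝ) else 0) * (x p.1 * y p.2)))
        * ((rr (ω.1 q.1) * rr (ω.1 q.2)) * ((if ω.2 q.1 = ω.2 q.2 then (1:ℝ) else 0) * (x q.1 * y q.2)))
        = (rr (ω.1 p.1) * rr (ω.1 p.2) * (rr (ω.1 q.1) * rr (ω.1 q.2)))
          * (((if ω.2 p.1 = ω.2 p.2 then (1:ℝ) else 0) * (if ω.2 q.1 = ω.2 q.2 then (1:ℝ) else 0))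
              * (x p.1 * y p.2 * (x q.1 * y q.2))) := by
      intro ω; ring
    rw [Finset.sum_congr rfl (fun ω _ => e ω),
      sum_split (fun s => rr (s p.1) * rr (s p.2) * (rr (s q.1) * rr (s q.2)))
        (fun h => ((if h p.1 = h p.2 then (1:ℝ) else 0) * (if h q.1 = h q.2 then (1:ℝ) else 0))
              * (x p.1 * y p.2 * (x q.1 * y q.2))),
      sum_four, ← Finset.sum_mul]
  rw [Finset.sum_congr rfl (fun p _ => Finset.sum_congr rfl (fun q _ => W p q))]
  simp only [Fintype.sum_prod_type]
  -- inner double sum evaluation for fixed a b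
  have inner : ∀ a b : Fin n,
      (∑ c : Fin n, ∑ d : Fin n,
        (if (a = b ∧ c = d) ∨ (a = c ∧ b = d) ∨ (a = d ∧ b = c) then (2:ℝ)^n else 0)
        * ((∑ h : Fin n → Fin k,
            (if h a = h b then (1:ℝ) else 0) * (if h c = h d then (1:ℝ) else 0))
          * (x a * y b * (x c * y d))))
      = if a = b then (2:ℝ)^n * (k:ℝ)^n * (x a * y a * ∑ c, x c * y c)
        else (2:ℝ)^n * ((k:ℝ)^n / k)
              * (x a * y b * (x a * y b) + x a * y b * (x b * y a)) := by
    intro a b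
    by_cases hab : a = b
    · subst hab
      rw [if_pos rfl]
      have e : ∀ c d : Fin n,
          (if (a = a ∧ c = d) ∨ (a = c ∧ a = d) ∨ (a = d ∧ a = c) then (2:ℝ)^n else 0)
          * ((∑ h : Fin n → Fin k,
              (if h a = h a then (1:ℝ) else 0) * (if h c = h d then (1:ℝ) else 0))
            * (x a * y a * (x c * y d)))
          = if c = d then (2:ℝ)^n * ((k:ℝ)^n * (x a * y a * (x c * y d))) else 0 := by
        intro c d
        by_cases hcd : c = d
        · subst hcd
          rw [if_pos (Or.inl ⟨rfl, rfl⟩), if_pos rfl]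
          have : ∀ h : Fin n → Fin k,
              (if h a = h a then (1:ℝ) else 0) * (if h c = h c then (1:ℝ) else 0) = 1 := by
            intro h; simp
          rw [Finset.sum_congr rfl (fun h _ => this h), sum_one_hash]
        · rw [if_neg hcd, if_neg, zero_mul]
          rintro (⟨-, h⟩ | ⟨h1, h2⟩ | ⟨h1, h2⟩) <;> exact hcd (by grind)
      rw [Finset.sum_congr rfl (fun c _ =>
        Finset.sum_congr rfl (fun d _ => e c d))]
      have e2 : ∀ c : Fin n,
          (∑ d : Fin n, if c = d then (2:ℝ)^n * ((k:ℝ)^n * (x a * y a * (x c * y d))) else 0)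
          = (2:ℝ)^n * ((k:ℝ)^n * (x a * y a * (x c * y c))) := by
        intro c; rw [Finset.sum_ite_eq]; simp
      rw [Finset.sum_congr rfl (fun c _ => e2 c)]
      rw [← Finset.mul_sum]
      simp only [← Finset.mul_sum]
      ring
    · rw [if_neg hab]
      have e : ∀ c d : Fin n,
          (if (a = b ∧ c = d) ∨ (a = c ∧ b = d) ∨ (a = d ∧ b = c) then (2:ℝ)^n else 0)
          * ((∑ h : Fin n → Fin k,
              (if h a = h b then (1:ℝ) else 0) * (if h c = h d then (1:ℝ) else 0))
            * (x a * y b * (x c * y d)))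
          = (if c = a ∧ d = b then
                (2:ℝ)^n * ((k:ℝ)^n / k) * (x a * y b * (x a * y b)) else 0)
            + (if c = b ∧ d = a then
                (2:ℝ)^n * ((k:ℝ)^n / k) * (x a * y b * (x b * y a)) else 0) := by
        intro c d
        by_cases h1 : c = a ∧ d = b
        · rw [h1.1, h1.2]
          rw [if_pos (Or.inr (Or.inl ⟨rfl, rfl⟩)), if_pos ⟨rfl, rfl⟩,
            if_neg (fun h : a = b ∧ b = a => hab h.1), add_zero]
          have : ∀ h : Fin n → Fin k,
              (if h a = h b then (1:ℝ) else 0) * (if h a = h b then (1:ℝ) else 0)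
              = (if h a = h b then (1:ℝ) else 0) := fun h => ite_one_mul_ite_one Iff.rfl
          rw [Finset.sum_congr rfl (fun h _ => this h), sum_hash_pair' hk hab]
          ring
        · by_cases h2 : c = b ∧ d = a
          · rw [h2.1, h2.2]
            rw [if_pos (Or.inr (Or.inr ⟨rfl, rfl⟩)),
              if_neg (fun h : b = a ∧ a = b => hab h.2), if_pos ⟨rfl, rfl⟩, zero_add]
            have : ∀ h : Fin n → Fin k,
                (if h a = h b then (1:ℝ) else 0) * (if h b = h a then (1:ℝ) else 0)
                = (if h a = h b then (1:ℝ) else 0) := fun h => ite_one_mul_ite_one eq_comm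
            rw [Finset.sum_congr rfl (fun h _ => this h), sum_hash_pair' hk hab]
            ring
          · rw [if_neg h1, if_neg h2, if_neg, zero_mul, add_zero]
            rintro (⟨h, -⟩ | ⟨ha, hb'⟩ | ⟨ha, hb'⟩)
            · exact hab h
            · exact h1 ⟨ha.symm, hb'.symm⟩
            · exact h2 ⟨hb'.symm, ha.symm⟩
      rw [Finset.sum_congr rfl (fun c _ => Finset.sum_congr rfl (fun d _ => e c d))]
      simp only [Finset.sum_add_distrib]
      rw [sum_ite_pair a b, sum_ite_pair b a]
      ring
  rw [Finset.sum_congr rfl (fun a _ => Finset.sum_congr rfl (fun b _ => inner a b))]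
  have split : ∀ a b : Fin n,
      (if a = b then (2:ℝ)^n * (k:ℝ)^n * (x a * y a * ∑ c, x c * y c)
        else (2:ℝ)^n * ((k:ℝ)^n / k)
              * (x a * y b * (x a * y b) + x a * y b * (x b * y a)))
      = (if a = b then (2:ℝ)^n * (k:ℝ)^n * (x a * y a * ∑ c, x c * y c) else 0)
        + (2:ℝ)^n * ((k:ℝ)^n / k)
            * (if a = b then 0 else (x a * y b * (x a * y b) + x a * y b * (x b * y a))) := by
    intro a b; split_ifs <;> ring
  rw [Finset.sum_congr rfl (fun a _ => Finset.sum_congr rfl (fun b _ => split a b))]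
  simp only [Finset.sum_add_distrib]
  have e4 : ∀ a : Fin n,
      (∑ b : Fin n, if a = b then (2:ℝ)^n * (k:ℝ)^n * (x a * y a * ∑ c, x c * y c) else 0)
      = (2:ℝ)^n * (k:ℝ)^n * (x a * y a * ∑ c, x c * y c) := by
    intro a; rw [Finset.sum_ite_eq]; simp
  rw [Finset.sum_congr rfl (fun a _ => e4 a)]
  simp only [← Finset.mul_sum]
  field_simp
  have h1 : ∑ i, x i * y i * (∑ j, x j * y j) = (∑ j, x j * y j) * (∑ j, x j * y j) :=
    (Finset.sum_mul _ _ _).symm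
  have h2 : ∑ i, (∑ j, x j * y j) * x i * y i = (∑ j, x j * y j) * (∑ j, x j * y j) := by
    rw [Finset.mul_sum]; exact Finset.sum_congr rfl (fun i _ => by ring)
  linear_combination (k:ℝ) * h1 - (k:ℝ) * h2

set_option synthInstance.maxHeartbeats 1000000 in
lemma card_cs {n k : ℕ} :
    ((Fintype.card ((Fin n → Bool) × (Fin n → Fin k)) : ℝ)) = (2:ℝ)^n * (k:ℝ)^n := by
  simp [Fintype.card_prod, Fintype.card_fun]

lemma csVar_eq {n k : ℕ} (hk : 0 < k) (f : (Fin n → Bool) × (Fin n → Fin k) → ℝ) :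
    csVar f = csExpect (fun ω => f ω ^ 2) - (csExpect f) ^ 2 := by
  have hk' : (k:ℝ) ≠ 0 := Nat.cast_ne_zero.mpr hk.ne'
  have hN : ((2:ℝ)^n * (k:ℝ)^n) ≠ 0 :=
    mul_ne_zero (pow_ne_zero _ two_ne_zero) (pow_ne_zero _ hk')
  haveI : Nonempty ((Fin n → Bool) × (Fin n → Fin k)) := ⟨⟨fun _ => true, fun _ => ⟨0, hk⟩⟩⟩
  unfold csVar csExpect
  rw [card_cs]
  set N : ℝ := (2:ℝ)^n * (k:ℝ)^n with hNdef
  set μ : ℝ := (∑ ω : (Fin n → Bool) × (Fin n → Fin k), f ω) / N with hμ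
  have e : ∀ ω : (Fin n → Bool) × (Fin n → Fin k),
      (f ω - μ)^2 = f ω^2 - (2*μ) * f ω + μ^2 := by intro ω; ring
  rw [Finset.sum_congr rfl (fun ω _ => e ω)]
  rw [Finset.sum_add_distrib, Finset.sum_sub_distrib, ← Finset.mul_sum,
    Finset.sum_const, Finset.card_univ, nsmul_eq_mul]
  rw [card_cs, ← hNdef]
  rw [hμ]
  field_simp
  ring

theorem stmt_3 {n k : ℕ} (hk : 0 < k) (x y : Fin n → ℝ) :
    csVar (fun ω : (Fin n → Bool) × (Fin n → Fin k) =>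
        (csMatrix ω *ᵥ x) ⬝ᵥ (csMatrix ω *ᵥ y)) ≤
      (1 / (k : ℝ)) * ((x ⬝ᵥ y) ^ 2 + (∑ i, x i ^ 2) * (∑ i, y i ^ 2)) ∧
    (1 / (k : ℝ)) * ((x ⬝ᵥ y) ^ 2 + (∑ i, x i ^ 2) * (∑ i, y i ^ 2)) ≤
      (2 / (k : ℝ)) * ((∑ i, x i ^ 2) * (∑ i, y i ^ 2)) := by
  have hk' : (k:ℝ) ≠ 0 := Nat.cast_ne_zero.mpr hk.ne'
  have hkpos : (0:ℝ) < k := Nat.cast_pos.mpr hk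
  have hN : ((2:ℝ)^n * (k:ℝ)^n) ≠ 0 :=
    mul_ne_zero (pow_ne_zero _ two_ne_zero) (pow_ne_zero _ hk')
  have hdot : x ⬝ᵥ y = ∑ i, x i * y i := rfl
  set Soff : ℝ := ∑ a, ∑ b, if a = b then 0
      else (x a * y b * (x a * y b) + x a * y b * (x b * y a)) with hSoff
  -- expectation of f
  have hEf : csExpect (fun ω : (Fin n → Bool) × (Fin n → Fin k) =>
      (csMatrix ω *ᵥ x) ⬝ᵥ (csMatrix ω *ᵥ y)) = ∑ i, x i * y i := by
    unfold csExpect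
    rw [card_cs, sumF, mul_comm, mul_div_assoc, div_self hN, mul_one]
  -- second moment
  have hEf2 : csExpect (fun ω : (Fin n → Bool) × (Fin n → Fin k) =>
      ((csMatrix ω *ᵥ x) ⬝ᵥ (csMatrix ω *ᵥ y)) ^ 2)
      = (∑ i, x i * y i) ^ 2 + Soff / k := by
    unfold csExpect
    rw [card_cs, sumF2 hk, mul_comm, mul_div_assoc, div_self hN, mul_one]
  have hVar : csVar (fun ω : (Fin n → Bool) × (Fin n → Fin k) =>
      (csMatrix ω *ᵥ x) ⬝ᵥ (csMatrix ω *ᵥ y)) = Soff / k := by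
    rw [csVar_eq hk, hEf2, hEf]; ring
  -- bounds on the two halves of Soff
  have hS1 : (∑ a : Fin n, ∑ b : Fin n, if a = b then 0 else x a * y b * (x a * y b))
      ≤ (∑ i, x i ^ 2) * (∑ i, y i ^ 2) := by
    calc (∑ a : Fin n, ∑ b : Fin n, if a = b then 0 else x a * y b * (x a * y b))
        ≤ ∑ a : Fin n, ∑ b : Fin n, x a ^ 2 * y b ^ 2 := by
          refine Finset.sum_le_sum (fun a _ => Finset.sum_le_sum (fun b _ => ?_))
          split_ifs
          · positivity
          · exact le_of_eq (by ring)
      _ = (∑ i, x i ^ 2) * (∑ i, y i ^ 2) := (Finset.sum_mul_sum _ _ _ _).symm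
  have hS2 : (∑ a : Fin n, ∑ b : Fin n, if a = b then 0 else x a * y b * (x b * y a))
      ≤ (∑ i, x i * y i) ^ 2 := by
    have e : ∀ a b : Fin n, (if a = b then (0:ℝ) else x a * y b * (x b * y a))
        = (x a * y a) * (x b * y b)
          - (if a = b then (x a * y a) * (x b * y b) else 0) := by
      intro a b; split_ifs with h
      · subst h; ring
      · ring
    rw [Finset.sum_congr rfl (fun a _ => Finset.sum_congr rfl (fun b _ => e a b))]
    simp only [Finset.sum_sub_distrib]
    have e2 : ∀ a : Fin n,
        (∑ b : Fin n, if a = b then (x a * y a) * (x b * y b) else 0)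
        = (x a * y a) * (x a * y a) := by
      intro a; rw [Finset.sum_ite_eq]; simp
    rw [Finset.sum_congr rfl (fun a _ => e2 a), sq, Finset.sum_mul_sum]
    have : (0:ℝ) ≤ ∑ a : Fin n, (x a * y a) * (x a * y a) :=
      Finset.sum_nonneg (fun a _ => mul_self_nonneg _)
    linarith
  have hSoffle : Soff ≤ (x ⬝ᵥ y) ^ 2 + (∑ i, x i ^ 2) * (∑ i, y i ^ 2) := by
    have split : Soff = (∑ a : Fin n, ∑ b : Fin n, if a = b then 0 else x a * y b * (x a * y b))
        + (∑ a : Fin n, ∑ b : Fin n, if a = b then 0 else x a * y b * (x b * y a)) := by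
      rw [hSoff, ← Finset.sum_add_distrib]
      refine Finset.sum_congr rfl (fun a _ => ?_)
      rw [← Finset.sum_add_distrib]
      refine Finset.sum_congr rfl (fun b _ => ?_)
      split_ifs <;> ring
    rw [split, hdot]
    linarith
  constructor
  · rw [hVar]
    have h1k : (0:ℝ) ≤ 1 / k := by positivity
    calc Soff / k = 1 / k * Soff := by ring
      _ ≤ 1 / k * ((x ⬝ᵥ y) ^ 2 + (∑ i, x i ^ 2) * (∑ i, y i ^ 2)) :=
          mul_le_mul_of_nonneg_left hSoffle h1k
  · have hcs : (x ⬝ᵥ y) ^ 2 ≤ (∑ i, x i ^ 2) * (∑ i, y i ^ 2) := by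
      rw [hdot]
      exact Finset.sum_mul_sq_le_sq_mul_sq _ _ _
    have h1k : (0:ℝ) ≤ 1 / k := by positivity
    calc (1 / (k:ℝ)) * ((x ⬝ᵥ y) ^ 2 + (∑ i, x i ^ 2) * (∑ i, y i ^ 2))
        ≤ (1 / (k:ℝ)) * ((∑ i, x i ^ 2) * (∑ i, y i ^ 2)
            + (∑ i, x i ^ 2) * (∑ i, y i ^ 2)) :=
          mul_le_mul_of_nonneg_left (by linarith) h1k
      _ = (2 / (k:ℝ)) * ((∑ i, x i ^ 2) * (∑ i, y i ^ 2)) := by ring
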